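/- Let A be the quotient of the free ℂ-algebra on three generators x, y, z by the two-sided ideal generated by x·y − y·x − y·z, x·z − z·x, and y·z − z·y (the homogenization of the enveloping algebra of the 2-dimensional solvable Lie algebra), and let g be the ℂ-algebra automorphism of A determined by g(x) = x, g(y) = −y, g(z) = z. Then the fixed subalgebra A^g = {a ∈ A : g(a) = a} is isomorphic to A as a ℂ-algebra. -/

import Mathlib

/-- The defining relations of the homogenization of the enveloping algebra of the
2-dimensional solvable Lie algebra: `xy = yx + yz`, `xz = zx`, `yz = zy`
(generator `0` is `x`, `1` is `y`, `2` is `z`). -/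
inductive SolvRel : FreeAlgebra ℂ (Fin 3) → FreeAlgebra ℂ (Fin 3) → Prop
  | xy : SolvRel (FreeAlgebra.ι ℂ (0 : Fin 3) * FreeAlgebra.ι ℂ (1 : Fin 3))
      (FreeAlgebra.ι ℂ (1 : Fin 3) * FreeAlgebra.ι ℂ (0 : Fin 3) +
        FreeAlgebra.ι ℂ (1 : Fin 3) * FreeAlgebra.ι ℂ (2 : Fin 3))
  | xz : SolvRel (FreeAlgebra.ι ℂ (0 : Fin 3) * FreeAlgebra.ι ℂ (2 : Fin 3))
      (FreeAlgebra.ι ℂ (2 : Fin 3) * FreeAlgebra.ι ℂ (0 : Fin 3))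
  | yz : SolvRel (FreeAlgebra.ι ℂ (1 : Fin 3) * FreeAlgebra.ι ℂ (2 : Fin 3))
      (FreeAlgebra.ι ℂ (2 : Fin 3) * FreeAlgebra.ι ℂ (1 : Fin 3))

/-- The homogenization of the enveloping algebra of the 2-dimensional solvable
Lie algebra. -/
abbrev SolvAlg : Type := RingQuot SolvRel

/-- The image of `x` in `SolvAlg`. -/
noncomputable def sX : SolvAlg := RingQuot.mkAlgHom ℂ SolvRel (FreeAlgebra.ι ℂ (0 : Fin 3))

/-- The image of `y` in `SolvAlg`. -/
noncomputable def sY : SolvAlg := RingQuot.mkAlgHom ℂ SolvRel (FreeAlgebra.ι ℂ (1 : Fin 3))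

/-- The image of `z` in `SolvAlg`. -/
noncomputable def sZ : SolvAlg := RingQuot.mkAlgHom ℂ SolvRel (FreeAlgebra.ι ℂ (2 : Fin 3))

/-- The fixed subalgebra `A^g` of a single algebra automorphism `g` of `A`. -/
def fixedSubalgebra1 {A : Type*} [Semiring A] [Algebra ℂ A]
    (g : A ≃ₐ[ℂ] A) : Subalgebra ℂ A where
  carrier := {a | g a = a}
  mul_mem' := by
    intro a b ha hb
    show g (a * b) = a * b
    rw [map_mul, ha, hb]
  add_mem' := by
    intro a b ha hb
    show g (a + b) = a + b
    rw [map_add, ha, hb]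
  algebraMap_mem' := fun r => g.commutes r

-- relations in SolvAlg
theorem rel_xy : sX * sY = sY * sX + sY * sZ := by
  simpa [sX, sY, sZ, map_mul, map_add] using RingQuot.mkAlgHom_rel ℂ SolvRel.xy

theorem rel_xz : sX * sZ = sZ * sX := by
  simpa [sX, sY, sZ, map_mul] using RingQuot.mkAlgHom_rel ℂ SolvRel.xz

theorem rel_yz : sY * sZ = sZ * sY := by
  simpa [sX, sY, sZ, map_mul] using RingQuot.mkAlgHom_rel ℂ SolvRel.yz

theorem comm_xz : Commute sX sZ := rel_xz
theorem comm_yz : Commute sY sZ := rel_yz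

/-- ext lemma : two alg homs out of SolvAlg agreeing on sX sY sZ are equal -/
theorem solv_hom_ext {B : Type*} [Semiring B] [Algebra ℂ B]
    (f₁ f₂ : SolvAlg →ₐ[ℂ] B) (hX : f₁ sX = f₂ sX) (hY : f₁ sY = f₂ sY)
    (hZ : f₁ sZ = f₂ sZ) : f₁ = f₂ := by
  apply RingQuot.ringQuot_ext'
  apply FreeAlgebra.hom_ext
  funext i
  fin_cases i
  · exact hX
  · exact hY
  · exact hZ

noncomputable def mono (m : ℕ × ℕ × ℕ) : SolvAlg := sY ^ m.1 * sZ ^ m.2.1 * sX ^ m.2.2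

theorem x_mul_y_pow (a : ℕ) : sX * sY ^ a = sY ^ a * sX + (a : ℂ) • (sY ^ a * sZ) := by
  induction a with
  | zero => simp
  | succ n ih =>
    have h1 : sX * sY ^ (n + 1) = (sX * sY ^ n) * sY := by rw [pow_succ, ← mul_assoc]
    rw [h1, ih, add_mul, smul_mul_assoc, mul_assoc, mul_assoc, ← rel_yz, rel_xy, mul_add]
    simp only [← mul_assoc]
    simp only [← pow_succ]
    push_cast
    rw [add_smul, one_smul]
    abel

/-- span of monomials -/
noncomputable def monoSpan : Submodule ℂ SolvAlg := Submodule.span ℂ (Set.range mono)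

theorem mono_mem (m) : mono m ∈ monoSpan := Submodule.subset_span ⟨m, rfl⟩

theorem y_mul_mono_eq (m) : sY * mono m = mono (m.1 + 1, m.2.1, m.2.2) := by
  simp only [mono, ← mul_assoc, pow_succ']

theorem z_mul_mono_eq (m) : sZ * mono m = mono (m.1, m.2.1 + 1, m.2.2) := by
  simp only [mono, mul_assoc]
  rw [← mul_assoc sZ, (comm_yz.symm.pow_right m.1).eq, mul_assoc]
  congr 1
  rw [← mul_assoc, ← pow_succ']

theorem x_mul_mono_eq (m) :
    sX * mono m = mono (m.1, m.2.1, m.2.2 + 1) + (m.1 : ℂ) • mono (m.1, m.2.1 + 1, m.2.2) := by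
  obtain ⟨a, b, c⟩ := m
  have e1 : sX * mono (a, b, c) = (sX * sY ^ a) * (sZ ^ b * sX ^ c) := by
    simp [mono, mul_assoc]
  rw [e1, x_mul_y_pow, add_mul, smul_mul_assoc]
  congr 1
  · show sY ^ a * sX * (sZ ^ b * sX ^ c) = mono (a, b, c + 1)
    simp only [mono, mul_assoc]
    congr 1
    rw [← mul_assoc, (comm_xz.pow_right b).eq, mul_assoc, ← pow_succ']
  · congr 1
    show sY ^ a * sZ * (sZ ^ b * sX ^ c) = mono (a, b + 1, c)
    simp only [mono, mul_assoc]
    congr 1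
    rw [← mul_assoc, ← pow_succ']

theorem x_mul_mono (m) : sX * mono m ∈ monoSpan := by
  rw [x_mul_mono_eq]
  exact add_mem (mono_mem _) (Submodule.smul_mem _ _ (mono_mem _))

theorem mulLeft_stab {t : SolvAlg} (h : ∀ m, t * mono m ∈ monoSpan) :
    ∀ b ∈ monoSpan, t * b ∈ monoSpan := by
  intro b hb
  have hle : monoSpan ≤ Submodule.comap (LinearMap.mulLeft ℂ t) monoSpan := by
    rw [monoSpan, Submodule.span_le]
    rintro _ ⟨m, rfl⟩
    exact h m
  exact hle hb

theorem mul_mem_monoSpan : ∀ (a : SolvAlg), ∀ b ∈ monoSpan, a * b ∈ monoSpan := by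
  intro a
  obtain ⟨f, rfl⟩ := RingQuot.mkAlgHom_surjective ℂ SolvRel a
  induction f with
  | grade0 r =>
    intro b hb
    rw [AlgHom.commutes, ← Algebra.smul_def]
    exact Submodule.smul_mem _ _ hb
  | grade1 i =>
    fin_cases i
    · exact mulLeft_stab x_mul_mono
    · exact mulLeft_stab fun m => (y_mul_mono_eq m) ▸ mono_mem _
    · exact mulLeft_stab fun m => (z_mul_mono_eq m) ▸ mono_mem _
  | mul f g hf hg =>
    intro b hb
    rw [map_mul, mul_assoc]
    exact hf _ (hg _ hb)
  | add f g hf hg =>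
    intro b hb
    rw [map_add, add_mul]
    exact add_mem (hf _ hb) (hg _ hb)

theorem mono_zero : mono (0, 0, 0) = 1 := by simp [mono]

theorem monoSpan_eq_top : monoSpan = ⊤ := by
  rw [eq_top_iff]
  intro a _
  have := mul_mem_monoSpan a (mono (0, 0, 0)) (mono_mem _)
  rwa [mono_zero, mul_one] at this

abbrev P3 : Type := MvPolynomial (Fin 3) ℂ

noncomputable def opY : Module.End ℂ P3 := LinearMap.mulLeft ℂ (MvPolynomial.X 0)
noncomputable def opZ : Module.End ℂ P3 := LinearMap.mulLeft ℂ (MvPolynomial.X 1)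
noncomputable def opX : Module.End ℂ P3 :=
  LinearMap.mulLeft ℂ (MvPolynomial.X 2) +
    (LinearMap.mulLeft ℂ (MvPolynomial.X 1 * MvPolynomial.X 0)).comp
      (MvPolynomial.pderiv 0).toLinearMap

theorem op_rel_xy : opX * opY = opY * opX + opY * opZ := by
  refine LinearMap.ext fun p => ?_
  simp only [opX, opY, opZ, Module.End.mul_apply, LinearMap.add_apply,
    LinearMap.comp_apply, LinearMap.mulLeft_apply]
  show MvPolynomial.X 2 * (MvPolynomial.X 0 * p) +
      MvPolynomial.X 1 * MvPolynomial.X 0 * (MvPolynomial.pderiv 0) (MvPolynomial.X 0 * p)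
    = MvPolynomial.X 0 * (MvPolynomial.X 2 * p +
        MvPolynomial.X 1 * MvPolynomial.X 0 * (MvPolynomial.pderiv 0) p) +
      MvPolynomial.X 0 * (MvPolynomial.X 1 * p)
  rw [MvPolynomial.pderiv_mul, MvPolynomial.pderiv_X_self]
  ring

theorem op_rel_xz : opX * opZ = opZ * opX := by
  refine LinearMap.ext fun p => ?_
  simp only [opX, opY, opZ, Module.End.mul_apply, LinearMap.add_apply,
    LinearMap.comp_apply, LinearMap.mulLeft_apply, Derivation.coeFn_coe]
  rw [MvPolynomial.pderiv_mul]
  have : (MvPolynomial.pderiv (0 : Fin 3)) (MvPolynomial.X 1 : P3) = 0 := by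
    rw [MvPolynomial.pderiv_X]
    simp
  rw [this]
  ring

theorem op_rel_yz : opY * opZ = opZ * opY := by
  refine LinearMap.ext fun p => ?_
  simp only [opY, opZ, Module.End.mul_apply, LinearMap.mulLeft_apply]
  ring

noncomputable def rho : SolvAlg →ₐ[ℂ] Module.End ℂ P3 :=
  RingQuot.liftAlgHom ℂ ⟨FreeAlgebra.lift ℂ ![opX, opY, opZ], by
    rintro a b ⟨⟩ <;>
      simp only [map_mul, map_add, FreeAlgebra.lift_ι_apply, Matrix.cons_val_zero,
        Matrix.cons_val_one, Matrix.head_cons, Matrix.cons_val_two, Matrix.tail_cons]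
    · exact op_rel_xy
    · exact op_rel_xz
    · exact op_rel_yz⟩

theorem rho_sX : rho sX = opX := by
  rw [sX, rho, RingQuot.liftAlgHom_mkAlgHom_apply, FreeAlgebra.lift_ι_apply]
  rfl

theorem rho_sY : rho sY = opY := by
  rw [sY, rho, RingQuot.liftAlgHom_mkAlgHom_apply, FreeAlgebra.lift_ι_apply]
  rfl

theorem rho_sZ : rho sZ = opZ := by
  rw [sZ, rho, RingQuot.liftAlgHom_mkAlgHom_apply, FreeAlgebra.lift_ι_apply]
  rfl

/-- evaluation at 1 -/
noncomputable def ev : SolvAlg →ₗ[ℂ] P3 where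
  toFun a := rho a 1
  map_add' a b := by simp [map_add]
  map_smul' c a := by simp [map_smul]

open MvPolynomial in
theorem pderiv0_X2_pow (c : ℕ) : (pderiv (0 : Fin 3)) ((X 2 : P3) ^ c) = 0 := by
  induction c with
  | zero => simp
  | succ n ih =>
    rw [pow_succ, pderiv_mul, ih]
    have : (pderiv (0 : Fin 3)) (X 2 : P3) = 0 := by rw [pderiv_X]; simp
    simp [this]

open MvPolynomial in
theorem opX_pow_apply_one (c : ℕ) : (opX ^ c) 1 = (X 2 : P3) ^ c := by
  induction c with
  | zero => simp
  | succ n ih =>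
    rw [pow_succ', Module.End.mul_apply, ih, opX]
    simp only [LinearMap.add_apply, LinearMap.comp_apply, LinearMap.mulLeft_apply,
      Derivation.coeFn_coe, pderiv0_X2_pow, mul_zero, add_zero, ← pow_succ']

open MvPolynomial in
theorem ev_mono (m : ℕ × ℕ × ℕ) :
    ev (mono m) = (X 0 : P3) ^ m.1 * (X 1 : P3) ^ m.2.1 * (X 2 : P3) ^ m.2.2 := by
  obtain ⟨a, b, c⟩ := m
  show rho (sY ^ a * sZ ^ b * sX ^ c) 1 = _
  rw [map_mul, map_mul, map_pow, map_pow, map_pow, rho_sX, rho_sY, rho_sZ,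
    Module.End.mul_apply, Module.End.mul_apply, opX_pow_apply_one]
  simp only [opY, opZ, LinearMap.pow_mulLeft, LinearMap.mulLeft_apply, ← mul_assoc]

open MvPolynomial in
theorem monomial_eq_prod (m : Fin 3 →₀ ℕ) :
    (X 0 : P3) ^ m 0 * (X 1 : P3) ^ m 1 * (X 2 : P3) ^ m 2 = monomial m 1 := by
  rw [monomial_eq, Finsupp.prod_fintype _ _ (fun i => pow_zero _), Fin.prod_univ_three]
  simp [mul_assoc]

/-- the triple of exponents as a finsupp -/
noncomputable def expF (m : ℕ × ℕ × ℕ) : Fin 3 →₀ ℕ :=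
  Finsupp.equivFunOnFinite.symm ![m.1, m.2.1, m.2.2]

@[simp] theorem expF_0 (m) : expF m 0 = m.1 := rfl
@[simp] theorem expF_1 (m) : expF m 1 = m.2.1 := rfl
@[simp] theorem expF_2 (m) : expF m 2 = m.2.2 := rfl

open MvPolynomial in
theorem ev_mono' (m : ℕ × ℕ × ℕ) : ev (mono m) = monomial (expF m) 1 := by
  rw [ev_mono, ← monomial_eq_prod]
  simp

noncomputable def Lmap : P3 →ₗ[ℂ] SolvAlg :=
  (MvPolynomial.basisMonomials (Fin 3) ℂ).constr ℂ fun m => mono (m 0, m 1, m 2)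

open MvPolynomial in
theorem Lmap_basis (m : Fin 3 →₀ ℕ) : Lmap (monomial m 1) = mono (m 0, m 1, m 2) := by
  have h : (monomial m 1 : P3) = basisMonomials (Fin 3) ℂ m := by
    rw [coe_basisMonomials]
  rw [h, Lmap, Module.Basis.constr_basis]

theorem Lmap_ev (a : SolvAlg) : Lmap (ev a) = a := by
  have : ∀ b ∈ monoSpan, Lmap (ev b) = b := by
    intro b hb
    induction hb using Submodule.span_induction with
    | mem x hx =>
      obtain ⟨m, rfl⟩ := hx
      rw [ev_mono', Lmap_basis]
      simp [mono]
    | zero => simp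
    | add x y _ _ hx hy => rw [map_add, map_add, hx, hy]
    | smul c x _ hx => rw [map_smul, map_smul, hx]
  exact this a (monoSpan_eq_top ▸ Submodule.mem_top)

theorem ev_injective : Function.Injective ev := by
  intro a b h
  rw [← Lmap_ev a, ← Lmap_ev b, h]

noncomputable def phi : SolvAlg →ₐ[ℂ] SolvAlg :=
  RingQuot.liftAlgHom ℂ ⟨FreeAlgebra.lift ℂ ![sX, sY ^ 2, (2 : ℂ) • sZ], by
    rintro a b ⟨⟩ <;>
      simp only [map_mul, map_add, FreeAlgebra.lift_ι_apply, Matrix.cons_val_zero,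
        Matrix.cons_val_one, Matrix.head_cons, Matrix.cons_val_two, Matrix.tail_cons]
    · rw [x_mul_y_pow 2, mul_smul_comm]
      norm_num
    · rw [smul_mul_assoc, mul_smul_comm, rel_xz]
    · rw [smul_mul_assoc, mul_smul_comm, (comm_yz.pow_left 2).eq]⟩

theorem phi_sX : phi sX = sX := by
  rw [sX, phi, RingQuot.liftAlgHom_mkAlgHom_apply, FreeAlgebra.lift_ι_apply]
  rfl

theorem phi_sY : phi sY = sY ^ 2 := by
  rw [sY, phi, RingQuot.liftAlgHom_mkAlgHom_apply, FreeAlgebra.lift_ι_apply]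
  rfl

theorem phi_sZ : phi sZ = (2 : ℂ) • sZ := by
  rw [sZ, phi, RingQuot.liftAlgHom_mkAlgHom_apply, FreeAlgebra.lift_ι_apply]
  rfl

theorem phi_mono (m : ℕ × ℕ × ℕ) :
    phi (mono m) = (2 : ℂ) ^ m.2.1 • mono (2 * m.1, m.2.1, m.2.2) := by
  obtain ⟨a, b, c⟩ := m
  show phi (sY ^ a * sZ ^ b * sX ^ c) = _
  rw [map_mul, map_mul, map_pow, map_pow, map_pow, phi_sX, phi_sY, phi_sZ, ← pow_mul,
    smul_pow, mul_smul_comm, smul_mul_assoc]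
  rfl

/-- linear left inverse of `phi` on basis -/
noncomputable def Lmap' : P3 →ₗ[ℂ] SolvAlg :=
  (MvPolynomial.basisMonomials (Fin 3) ℂ).constr ℂ fun m =>
    if Even (m 0) then ((2 : ℂ) ^ (m 1))⁻¹ • mono (m 0 / 2, m 1, m 2) else 0

open MvPolynomial in
theorem Lmap'_basis (m : Fin 3 →₀ ℕ) :
    Lmap' (monomial m 1) =
      if Even (m 0) then ((2 : ℂ) ^ (m 1))⁻¹ • mono (m 0 / 2, m 1, m 2) else 0 := by
  have h : (monomial m 1 : P3) = basisMonomials (Fin 3) ℂ m := by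
    rw [coe_basisMonomials]
  rw [h, Lmap', Module.Basis.constr_basis]

theorem phi_injective : Function.Injective phi := by
  have key : ∀ a, Lmap' (ev (phi a)) = a := by
    intro a
    have : ∀ b ∈ monoSpan, Lmap' (ev (phi b)) = b := by
      intro b hb
      induction hb using Submodule.span_induction with
      | mem x hx =>
        obtain ⟨m, rfl⟩ := hx
        rw [phi_mono, map_smul, map_smul, ev_mono', Lmap'_basis]
        simp only [expF_0, expF_1, expF_2]
        simp only [show Even (2 * m.1) from ⟨m.1, (two_mul m.1).symm ▸ rfl⟩, ↓reduceIte]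
        rw [Nat.mul_div_cancel_left m.1 (by norm_num : 0 < 2), smul_smul]
        rw [mul_inv_cancel₀ (pow_ne_zero _ (by norm_num : (2:ℂ) ≠ 0)), one_smul]
      | zero => simp
      | add x y _ _ hx hy => rw [map_add, map_add, map_add, hx, hy]
      | smul c x _ hx => rw [map_smul, map_smul, map_smul, hx]
    exact this a (monoSpan_eq_top ▸ Submodule.mem_top)
  intro a b h
  rw [← key a, ← key b, h]

section
variable (g : SolvAlg ≃ₐ[ℂ] SolvAlg)

theorem g_phi (hx : g sX = sX) (hy : g sY = - sY) (hz : g sZ = sZ) (a : SolvAlg) :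
    g (phi a) = phi a := by
  have : (g.toAlgHom.comp phi) = phi := by
    apply solv_hom_ext
    · show g (phi sX) = phi sX
      rw [phi_sX, hx]
    · show g (phi sY) = phi sY
      rw [phi_sY, map_pow, hy, pow_two, pow_two]
      exact neg_mul_neg sY sY
    · show g (phi sZ) = phi sZ
      rw [phi_sZ, map_smul, hz]
  exact congrArg (fun f => f a) (congrArg DFunLike.coe this)

theorem g_mono (hx : g sX = sX) (hy : g sY = - sY) (hz : g sZ = sZ) (m : ℕ × ℕ × ℕ) :
    g (mono m) = ((-1 : ℂ)) ^ m.1 • mono m := by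
  obtain ⟨a, b, c⟩ := m
  show g (sY ^ a * sZ ^ b * sX ^ c) = _
  rw [map_mul, map_mul, map_pow, map_pow, map_pow, hx, hy, hz, neg_pow sY]
  have h1 : ((-1 : SolvAlg)) ^ a = algebraMap ℂ SolvAlg ((-1 : ℂ) ^ a) := by
    simp
  rw [h1]
  simp only [mono, mul_assoc, smul_mul_assoc, ← Algebra.smul_def]

theorem mono_even_mem (a b c : ℕ) : mono (2 * a, b, c) ∈ phi.range := by
  have h := phi_mono (a, b, c)
  have h2 : mono (2 * a, b, c) = ((2 : ℂ) ^ b)⁻¹ • phi (mono (a, b, c)) := by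
    rw [h, smul_smul, inv_mul_cancel₀ (pow_ne_zero _ (by norm_num : (2:ℂ) ≠ 0)), one_smul]
  rw [h2]
  exact SMulMemClass.smul_mem _ ⟨mono (a, b, c), rfl⟩

theorem mono_fix_mem (hx : g sX = sX) (hy : g sY = - sY) (hz : g sZ = sZ) (m : ℕ × ℕ × ℕ) :
    mono m + g (mono m) ∈ Subalgebra.toSubmodule phi.range := by
  rw [g_mono g hx hy hz]
  obtain ⟨a, b, c⟩ := m
  rcases Nat.even_or_odd a with he | ho
  · rw [he.neg_one_pow, one_smul, ← two_smul ℂ]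
    obtain ⟨k, hk⟩ := he
    subst hk
    rw [← two_mul]
    exact Submodule.smul_mem _ _ (mono_even_mem k b c)
  · rw [ho.neg_one_pow, neg_one_smul ℂ (mono (a, b, c)), add_neg_cancel]
    exact Submodule.zero_mem _

theorem fixed_mem_range (hx : g sX = sX) (hy : g sY = - sY) (hz : g sZ = sZ)
    {a : SolvAlg} (ha : g a = a) : a ∈ phi.range := by
  have hsum : ∀ b ∈ monoSpan, b + g b ∈ Subalgebra.toSubmodule phi.range := by
    intro b hb
    induction hb using Submodule.span_induction with
    | mem x hxm =>
      obtain ⟨m, rfl⟩ := hxm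
      exact mono_fix_mem g hx hy hz m
    | zero => simp
    | add x y _ _ hx' hy' =>
      have : (x + y) + g (x + y) = (x + g x) + (y + g y) := by
        rw [map_add]; abel
      rw [this]
      exact add_mem hx' hy'
    | smul c x _ hx' =>
      have : (c • x) + g (c • x) = c • (x + g x) := by
        rw [map_smul, smul_add]
      rw [this]
      exact Submodule.smul_mem _ _ hx'
  have h2 : a + g a ∈ Subalgebra.toSubmodule phi.range :=
    hsum a (monoSpan_eq_top ▸ Submodule.mem_top)
  rw [ha, ← two_smul ℂ] at h2
  have : a = (2⁻¹ : ℂ) • ((2 : ℂ) • a) := by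
    rw [smul_smul]; norm_num
  rw [this]
  exact Submodule.smul_mem _ _ h2

theorem range_eq_fixed (hx : g sX = sX) (hy : g sY = - sY) (hz : g sZ = sZ) :
    phi.range = fixedSubalgebra1 g := by
  apply le_antisymm
  · rintro _ ⟨a, rfl⟩
    exact g_phi g hx hy hz a
  · intro a ha
    exact fixed_mem_range g hx hy hz ha

end

theorem stmt17 (g : SolvAlg ≃ₐ[ℂ] SolvAlg)
    (hx : g sX = sX) (hy : g sY = - sY) (hz : g sZ = sZ) :
    Nonempty ((fixedSubalgebra1 g) ≃ₐ[ℂ] SolvAlg) := by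
  refine ⟨(((AlgEquiv.ofInjective phi phi_injective).trans
    (Subalgebra.equivOfEq _ _ (range_eq_fixed g hx hy hz))).symm)⟩
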